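/- arXiv:1508.05808 — 5 statements merged into one kernel-verified Lean document; each statement's English description precedes it below -/
import Mathlib

section
/- Parallel ARMA_K: For k = 1,…,K let y_{t+1}^{(k)} = ψ^{(k)} M y_t^{(k)} + φ^{(k)} x with |ψ^{(k)}| ρ(M) < 1 and ψ^{(k)} ≠ 0. Then the total output y_t = Σ_k y_t^{(k)} converges to Σ_n ( Σ_{k=1}^K r^{(k)}/(μ_n − p^{(k)}) ) ⟨x, φ_n⟩ φ_n, where r^{(k)} = −φ^{(k)}/ψ^{(k)} and p^{(k)} = 1/ψ^{(k)}. -/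
/-!
Each stable recursion `y_{t+1} = ψ M y_t + φ x` decouples in the orthonormal eigenbasis `(φ_n)` of
the symmetric matrix `M`: the coordinate `⟪φ_n, y_t⟫` obeys the scalar affine recursion
`c_{t+1} = ψ μ_n c_t + φ ⟪φ_n, x⟫`, which is a contraction because `|ψ μ_n| ≤ |ψ| ρ(M) < 1`,
and so converges to `φ ⟪φ_n, x⟫ / (1 - ψ μ_n) = r / (μ_n - p) ⟪φ_n, x⟫`.
Summing the `K` limits gives the parallel ARMA_K response.
-/

open Filter
open scoped InnerProductSpace ENNReal Topology

theorem tendsto_of_affine_recurrence {𝕜 : Type*} [NormedField 𝕜] {a b : 𝕜} (ha : ‖a‖ < 1)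
    {c : ℕ → 𝕜} (hc : ∀ t, c (t + 1) = a * c t + b) :
    Tendsto c atTop (𝓝 (b / (1 - a))) := by
  have hne : 1 - a ≠ 0 := fun h => by
    rw [← eq_of_sub_eq_zero h, norm_one] at ha
    exact lt_irrefl _ ha
  set L := b / (1 - a)
  have hfix : a * L + b = L := by
    unfold L
    field_simp
    ring
  have hclosed : ∀ t, c t = L + a ^ t * (c 0 - L) := by
    intro t
    induction t with
    | zero => simp
    | succ t ih =>
      rw [hc, ih]
      linear_combination hfix
  have hpow : Tendsto (fun t => L + a ^ t * (c 0 - L)) atTop (𝓝 L) := by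
    simpa using ((tendsto_pow_atTop_nhds_zero_of_norm_lt_one ha).mul_const (c 0 - L)).const_add L
  exact hpow.congr fun t => (hclosed t).symm

theorem norm_mul_lt_one_of_mem_spectrum {𝕜 A : Type*} [NormedField 𝕜] [Ring A] [Algebra 𝕜 A]
    {a : A} {ψ μ : 𝕜} (hμ : μ ∈ spectrum 𝕜 a) (hψ : (‖ψ‖₊ : ℝ≥0∞) * spectralRadius 𝕜 a < 1) :
    ‖ψ * μ‖ < 1 := by
  have hle : (‖μ‖₊ : ℝ≥0∞) ≤ spectralRadius 𝕜 a := le_iSup₂ (α := ℝ≥0∞) μ hμ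
  have hlt : ((‖ψ * μ‖₊ : NNReal) : ℝ≥0∞) < 1 := by
    rw [nnnorm_mul, ENNReal.coe_mul]
    exact lt_of_le_of_lt (by gcongr) hψ
  exact_mod_cast hlt

theorem Matrix.mem_spectrum_of_toEuclideanCLM_apply_eq_smul {𝕜 n : Type*} [RCLike 𝕜]
    [Fintype n] [DecidableEq n] (A : Matrix n n 𝕜) {u : EuclideanSpace 𝕜 n} (hu : u ≠ 0)
    {μ : 𝕜} (h : toEuclideanCLM (𝕜 := 𝕜) A u = μ • u) : μ ∈ spectrum 𝕜 A := by
  rw [← Matrix.spectrum_toLin']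
  refine Module.End.HasEigenvalue.mem_spectrum
    (Module.End.hasEigenvalue_of_hasEigenvector (x := WithLp.ofLp u) ⟨?_, ?_⟩)
  · rw [Module.End.mem_eigenspace_iff, Matrix.toLin'_apply]
    simpa using congrArg WithLp.ofLp h
  · simpa using hu

theorem LinearMap.IsSymmetric.inner_apply_eq_mul_inner {𝕜 E : Type*} [RCLike 𝕜]
    [NormedAddCommGroup E] [InnerProductSpace 𝕜 E] {T : E →ₗ[𝕜] E} (hT : T.IsSymmetric)
    {v : E} {μ : ℝ} (hv : T v = (μ : 𝕜) • v) (u : E) : ⟪v, T u⟫_𝕜 = μ * ⟪v, u⟫_𝕜 := by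
  rw [← hT, hv, inner_smul_left, RCLike.conj_ofReal]

theorem Orthonormal.sum_inner_smul_eq {𝕜 E ι : Type*} [RCLike 𝕜] [NormedAddCommGroup E]
    [InnerProductSpace 𝕜 E] [FiniteDimensional 𝕜 E] [Fintype ι] {v : ι → E}
    (hv : Orthonormal 𝕜 v) (hcard : Fintype.card ι = Module.finrank 𝕜 E) (u : E) :
    ∑ i, ⟪v i, u⟫_𝕜 • v i = u := by
  have hspan := (hv.linearIndependent.span_eq_top_of_card_eq_finrank' hcard).ge
  simpa using (OrthonormalBasis.mk hv hspan).sum_repr' u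

theorem tendsto_of_affine_recurrence_of_isSymmetric {𝕜 E ι : Type*} [RCLike 𝕜]
    [NormedAddCommGroup E] [InnerProductSpace 𝕜 E] [FiniteDimensional 𝕜 E] [Fintype ι]
    {T : E →ₗ[𝕜] E} (hT : T.IsSymmetric) {v : ι → E} (hv : Orthonormal 𝕜 v)
    (hcard : Fintype.card ι = Module.finrank 𝕜 E) {μ : ι → ℝ}
    (hμ : ∀ i, T (v i) = (μ i : 𝕜) • v i) {ψ φ : 𝕜} (hψ : ∀ i, ‖ψ * μ i‖ < 1) {x : E}
    {y : ℕ → E} (hy : ∀ t, y (t + 1) = ψ • T (y t) + φ • x) :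
    Tendsto y atTop (𝓝 (∑ i, (φ / (1 - ψ * μ i)) • ⟪v i, x⟫_𝕜 • v i)) := by
  have hcoord : ∀ i, Tendsto (fun t => ⟪v i, y t⟫_𝕜) atTop
      (𝓝 (φ * ⟪v i, x⟫_𝕜 / (1 - ψ * μ i))) := fun i =>
    tendsto_of_affine_recurrence (hψ i) fun t => by
      rw [hy, inner_add_right, inner_smul_right, inner_smul_right,
        hT.inner_apply_eq_mul_inner (hμ i)]
      ring
  have hsum := tendsto_finsetSum Finset.univ fun i _ => (hcoord i).smul_const (v i)
  simp_rw [hv.sum_inner_smul_eq hcard] at hsum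
  convert hsum using 3 with i
  rw [smul_smul, mul_div_right_comm]

theorem div_one_sub_mul_eq_neg_div_div_sub_inv {𝕜 : Type*} [Field 𝕜] {ψ : 𝕜} (hψ : ψ ≠ 0)
    (φ μ : 𝕜) : φ / (1 - ψ * μ) = (-φ / ψ) / (μ - 1 / ψ) := by
  rw [div_div, mul_sub, mul_one_div_cancel hψ, ← neg_sub 1 (ψ * μ), neg_div_neg_eq]

/-- Parallel ARMA_K: running `K` stable ARMA₁ recursions
`y^{(k)}_{t+1} = ψ^{(k)} M y^{(k)}_t + φ^{(k)} x` in parallel (arbitrary initial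
conditions), the total output `∑ k, y^{(k)}_t` converges to
`∑ n (∑ k r^{(k)}/(μ n − p^{(k)})) ⟨x, φ n⟩ φ n` with `r^{(k)} = −φ^{(k)}/ψ^{(k)}`,
`p^{(k)} = 1/ψ^{(k)}`. -/
theorem armaK_parallel {N K : ℕ} (M : Matrix (Fin N) (Fin N) ℝ) (hM : M.IsSymm)
    (μ : Fin N → ℝ) (v : Fin N → EuclideanSpace ℂ (Fin N)) (hortho : Orthonormal ℂ v)
    (heig : ∀ n, (Matrix.toEuclideanCLM (𝕜 := ℂ) (M.map Complex.ofReal)) (v n) =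
      (μ n : ℂ) • v n)
    (ψ φ : Fin K → ℂ) (hψ : ∀ k, ψ k ≠ 0)
    (hstab : ∀ k, (‖ψ k‖₊ : ℝ≥0∞) * spectralRadius ℂ (M.map Complex.ofReal) < 1)
    (x : EuclideanSpace ℂ (Fin N)) (y : Fin K → ℕ → EuclideanSpace ℂ (Fin N))
    (hy : ∀ k t, y k (t + 1) =
      ψ k • (Matrix.toEuclideanCLM (𝕜 := ℂ) (M.map Complex.ofReal)) (y k t) + φ k • x) :
    Tendsto (fun t => ∑ k, y k t) atTop (nhds
      (∑ n, (∑ k, (-(φ k) / ψ k) / ((μ n : ℂ) - 1 / ψ k)) • ⟪v n, x⟫_ℂ • v n)) := by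
  have hherm : (M.map Complex.ofReal).IsHermitian :=
    (Matrix.isHermitian_iff_isSymm.mpr hM).map _ fun r => (Complex.conj_ofReal r).symm
  have hsymm := Matrix.isSymmetric_toEuclideanLin_iff.mpr hherm
  have hcontract : ∀ k n, ‖ψ k * μ n‖ < 1 := fun k n =>
    norm_mul_lt_one_of_mem_spectrum
      ((M.map Complex.ofReal).mem_spectrum_of_toEuclideanCLM_apply_eq_smul
        (hortho.ne_zero n) (heig n)) (hstab k)
  have hlim := fun k => tendsto_of_affine_recurrence_of_isSymmetric hsymm hortho (by simp) heig
    (hcontract k) (hy k)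
  have hsum := tendsto_finsetSum Finset.univ fun k _ => hlim k
  rw [Finset.sum_comm] at hsum
  simp only [← Finset.sum_smul, div_one_sub_mul_eq_neg_div_div_sub_inv (hψ _)] at hsum
  exact hsum
end

section
/- Periodic ARMA_K steady state: Under the previous setting, if |Π_{τ=0}^{K-1}(θ_τ + ψ_τ μ_n)| < 1 for every eigenvalue μ_n of M, then y_{iK} converges as i → ∞ to Σ_n g(μ_n) ⟨x, φ_n⟩ φ_n, where g(μ) = [Σ_{τ=0}^{K-1} Π_{σ=K−τ}^{K−1}(θ_σ + ψ_σ μ) · φ_{K−τ−1}] / [1 − Π_{τ=0}^{K-1}(θ_τ + ψ_τ μ)]. -/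
/-!
Expanding in the orthonormal eigenbasis decouples the recursion: the coordinate
`c_t = ⟪v_n, y_t⟫` obeys the scalar recursion `c_{t+1} = (θ_t + ψ_t μ_n) c_t + φ_t ⟪v_n, x⟫`.
Unrolling it over one period gives `c_{(i+1)K} = P c_{iK} + Q` with `P = ∏_{τ<K} (θ_τ + ψ_τ μ_n)`,
and `|P| < 1` makes `c_{iK}` converge to the fixed point `Q / (1 - P)`.
-/

open Filter Topology Finset
open scoped InnerProductSpace

section Eigenbasis

variable {𝕜 E ι : Type*} [RCLike 𝕜] [NormedAddCommGroup E] [InnerProductSpace 𝕜 E]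
  [FiniteDimensional 𝕜 E] [Fintype ι] {v : ι → E}

theorem Orthonormal.sum_inner_smul_eq_of_card_eq_finrank (hv : Orthonormal 𝕜 v)
    (hcard : Fintype.card ι = Module.finrank 𝕜 E) (z : E) :
    ∑ i, ⟪v i, z⟫_𝕜 • v i = z := by
  have hspan := (hv.linearIndependent.span_eq_top_of_card_eq_finrank' hcard).ge
  simpa using (OrthonormalBasis.mk hv hspan).sum_repr' z

theorem Orthonormal.inner_apply_of_apply_eq_smul {F : Type*} [FunLike F E E]
    [LinearMapClass F 𝕜 E E] (hv : Orthonormal 𝕜 v)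
    (hcard : Fintype.card ι = Module.finrank 𝕜 E) {A : F} {μ : ι → 𝕜}
    (hA : ∀ i, A (v i) = μ i • v i) (i : ι) (z : E) :
    ⟪v i, A z⟫_𝕜 = μ i * ⟪v i, z⟫_𝕜 := by
  calc ⟪v i, A z⟫_𝕜 = ⟪v i, ∑ j, (μ j * ⟪v j, z⟫_𝕜) • v j⟫_𝕜 := by
        conv_lhs => rw [← hv.sum_inner_smul_eq_of_card_eq_finrank hcard z]
        simp only [map_sum, map_smul, hA, smul_smul, mul_comm]
    _ = μ i * ⟪v i, z⟫_𝕜 := hv.inner_right_fintype _ i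

end Eigenbasis

section AffineRecurrence

theorem affine_recurrence_add {R : Type*} [CommSemiring R] {a d c : ℕ → R}
    (hc : ∀ t, c (t + 1) = a t * c t + d t) (s m : ℕ) :
    c (s + m) = (∏ j ∈ range m, a (s + j)) * c s +
      ∑ j ∈ range m, (∏ σ ∈ Ico (j + 1) m, a (s + σ)) * d (s + j) := by
  induction m with
  | zero => simp
  | succ m ih =>
    have hprod : ∀ j ∈ range m, (∏ σ ∈ Ico (j + 1) (m + 1), a (s + σ)) * d (s + j) =
        (∏ σ ∈ Ico (j + 1) m, a (s + σ)) * d (s + j) * a (s + m) := fun j hj => by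
      rw [prod_Ico_succ_top (mem_range.mp hj)]
      ring
    rw [← add_assoc, hc, ih, prod_range_succ, sum_range_succ, sum_congr rfl hprod,
      ← sum_mul, Ico_self, prod_empty]
    ring

theorem sum_range_reflect_prod_Ico {R : Type*} [CommSemiring R] (K : ℕ) (a f : ℕ → R) :
    ∑ τ ∈ range K, (∏ σ ∈ Ico (K - τ) K, a σ) * f (K - τ - 1) =
      ∑ j ∈ range K, (∏ σ ∈ Ico (j + 1) K, a σ) * f j := by
  rw [← sum_range_reflect]
  refine sum_congr rfl fun τ hτ => ?_
  have hτK := mem_range.mp hτ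
  rw [show K - (K - 1 - τ) = τ + 1 by omega, Nat.add_sub_cancel]

variable {𝕜 : Type*} [NormedField 𝕜]

theorem tendsto_of_affine_recurrence_s9 {P Q : 𝕜} (hP : ‖P‖ < 1) {c : ℕ → 𝕜}
    (hc : ∀ i, c (i + 1) = P * c i + Q) :
    Tendsto c atTop (𝓝 (Q / (1 - P))) := by
  have hP1 : 1 - P ≠ 0 := sub_ne_zero.mpr fun h => by simp [← h] at hP
  set L := Q / (1 - P)
  have hfix : P * L + Q = L := by
    simp only [L]
    field_simp
    ring
  have hclosed : ∀ i, c i = P ^ i * (c 0 - L) + L := by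
    intro i
    induction i with
    | zero => simp
    | succ i ih =>
      rw [hc, ih, pow_succ]
      linear_combination hfix
  have hpow : Tendsto (fun i => P ^ i * (c 0 - L) + L) atTop (𝓝 (0 * (c 0 - L) + L)) :=
    ((tendsto_pow_atTop_nhds_zero_of_norm_lt_one hP).mul_const _).add_const L
  simpa [← hclosed] using hpow

theorem tendsto_periodic_affine_recurrence {K : ℕ} {a d c : ℕ → 𝕜}
    (ha : Function.Periodic a K) (hd : Function.Periodic d K)
    (hc : ∀ t, c (t + 1) = a t * c t + d t) (hstab : ‖∏ τ ∈ range K, a τ‖ < 1) :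
    Tendsto (fun i => c (i * K)) atTop (𝓝
      ((∑ τ ∈ range K, (∏ σ ∈ Ico (K - τ) K, a σ) * d (K - τ - 1)) /
        (1 - ∏ τ ∈ range K, a τ))) := by
  rw [sum_range_reflect_prod_Ico]
  refine tendsto_of_affine_recurrence_s9 hstab fun i => ?_
  have hshift {f : ℕ → 𝕜} (hf : Function.Periodic f K) (j : ℕ) : f (i * K + j) = f j := by
    rw [add_comm]
    exact hf.nat_mul i j
  rw [add_mul, one_mul, affine_recurrence_add hc]
  simp only [hshift ha, hshift hd]

end AffineRecurrence

theorem armaK_periodic_steady_state_general {N K : ℕ} (M : Matrix (Fin N) (Fin N) ℝ)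
    (μ : Fin N → ℝ) (v : Fin N → EuclideanSpace ℂ (Fin N)) (hortho : Orthonormal ℂ v)
    (heig : ∀ n, (Matrix.toEuclideanCLM (𝕜 := ℂ) (M.map Complex.ofReal)) (v n) =
      (μ n : ℂ) • v n)
    (θ ψ φ : ℕ → ℂ)
    (hθ : ∀ t, θ (t + K) = θ t) (hψ : ∀ t, ψ (t + K) = ψ t) (hφ : ∀ t, φ (t + K) = φ t)
    (hstab : ∀ n, ‖∏ τ ∈ Finset.range K, (θ τ + ψ τ * (μ n : ℂ))‖ < 1)
    (x : EuclideanSpace ℂ (Fin N)) (y : ℕ → EuclideanSpace ℂ (Fin N))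
    (hy : ∀ t, y (t + 1) = θ t • y t +
      ψ t • (Matrix.toEuclideanCLM (𝕜 := ℂ) (M.map Complex.ofReal)) (y t) + φ t • x) :
    Tendsto (fun i => y (i * K)) atTop (nhds
      (∑ n,
        ((∑ τ ∈ Finset.range K,
            (∏ σ ∈ Finset.Ico (K - τ) K, (θ σ + ψ σ * (μ n : ℂ))) * φ (K - τ - 1)) /
          (1 - ∏ τ ∈ Finset.range K, (θ τ + ψ τ * (μ n : ℂ)))) •
        ⟪v n, x⟫_ℂ • v n)) := by
  have hcard : Fintype.card (Fin N) = Module.finrank ℂ (EuclideanSpace ℂ (Fin N)) := by simp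
  have hexpand := hortho.sum_inner_smul_eq_of_card_eq_finrank hcard
  rw [show (fun i => y (i * K)) = fun i => ∑ n, ⟪v n, y (i * K)⟫_ℂ • v n from
    funext fun i => (hexpand _).symm]
  refine tendsto_finsetSum _ fun n _ => ?_
  have hcoord : ∀ t, ⟪v n, y (t + 1)⟫_ℂ =
      (θ t + ψ t * μ n) * ⟪v n, y t⟫_ℂ + φ t * ⟪v n, x⟫_ℂ := fun t => by
    rw [hy, inner_add_right, inner_add_right, inner_smul_right, inner_smul_right,
      inner_smul_right, hortho.inner_apply_of_apply_eq_smul hcard heig]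
    ring
  have hlim := tendsto_periodic_affine_recurrence (a := fun t => θ t + ψ t * μ n)
    (d := fun t => φ t * ⟪v n, x⟫_ℂ) (c := fun t => ⟪v n, y t⟫_ℂ)
    (fun t => by simp only [hθ t, hψ t]) (fun t => by simp only [hφ t]) hcoord (hstab n)
  simp_rw [← mul_assoc, ← sum_mul, mul_div_right_comm] at hlim
  simpa only [smul_smul] using hlim.smul_const (v n)

/-- Periodic ARMA_K steady state: for the recursion `y_{t+1} = (θ_t I + ψ_t M) y_t + φ_t x`
with `K`-periodic coefficients, if `|∏_{τ<K} (θ_τ + ψ_τ μ_n)| < 1` for every eigenvalue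
`μ_n` of `M`, then `y_{iK}` converges as `i → ∞` to `∑ n, g(μ_n) ⟨x, φ_n⟩ φ_n`, where
`g(μ) = (∑_{τ<K} ∏_{σ=K-τ}^{K-1} (θ_σ + ψ_σ μ) φ_{K-τ-1}) / (1 − ∏_{τ<K} (θ_τ + ψ_τ μ))`. -/
theorem armaK_periodic_steady_state {N K : ℕ} (M : Matrix (Fin N) (Fin N) ℝ)
    (hM : M.IsSymm)
    (μ : Fin N → ℝ) (v : Fin N → EuclideanSpace ℂ (Fin N)) (hortho : Orthonormal ℂ v)
    (heig : ∀ n, (Matrix.toEuclideanCLM (𝕜 := ℂ) (M.map Complex.ofReal)) (v n) =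
      (μ n : ℂ) • v n)
    (θ ψ φ : ℕ → ℂ)
    (hθ : ∀ t, θ (t + K) = θ t) (hψ : ∀ t, ψ (t + K) = ψ t) (hφ : ∀ t, φ (t + K) = φ t)
    (hstab : ∀ n, ‖∏ τ ∈ Finset.range K, (θ τ + ψ τ * (μ n : ℂ))‖ < 1)
    (x : EuclideanSpace ℂ (Fin N)) (y : ℕ → EuclideanSpace ℂ (Fin N))
    (hy : ∀ t, y (t + 1) = θ t • y t +
      ψ t • (Matrix.toEuclideanCLM (𝕜 := ℂ) (M.map Complex.ofReal)) (y t) + φ t • x) :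
    Tendsto (fun i => y (i * K)) atTop (nhds
      (∑ n,
        ((∑ τ ∈ Finset.range K,
            (∏ σ ∈ Finset.Ico (K - τ) K, (θ σ + ψ σ * (μ n : ℂ))) * φ (K - τ - 1)) /
          (1 - ∏ τ ∈ Finset.range K, (θ τ + ψ τ * (μ n : ℂ)))) •
        ⟪v n, x⟫_ℂ • v n)) :=
  armaK_periodic_steady_state_general M μ v hortho heig θ ψ φ hθ hψ hφ hstab x y hy
end

section
/- A sufficient stability condition for periodic ARMA_K: if Π_{τ=0}^{K-1} (|θ_τ| + |ψ_τ| ρ(M)) < 1, then ρ(Γ_{K-1}⋯Γ_0) < 1, where Γ_τ = θ_τ I + ψ_τ M. -/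
/-!
In a C⋆-algebra the norm of a self-adjoint element equals its spectral radius, so with the
L2 operator norm each factor `Γ_τ = θ_τ • 1 + ψ_τ • M` has norm at most `|θ_τ| + |ψ_τ| ρ(M)`.
Submultiplicativity of the norm bounds the norm of the product by the product of these
bounds, and the spectral radius never exceeds the norm.
-/

open scoped ENNReal NNReal

theorem nnnorm_smul_one_add_smul_le {𝕜 A : Type*} [NormedField 𝕜] [SeminormedRing A]
    [NormOneClass A] [Module 𝕜 A] [NormSMulClass 𝕜 A] (c d : 𝕜) (a : A) :
    ‖c • (1 : A) + d • a‖₊ ≤ ‖c‖₊ + ‖d‖₊ * ‖a‖₊ :=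
  calc ‖c • (1 : A) + d • a‖₊ ≤ ‖c • (1 : A)‖₊ + ‖d • a‖₊ := nnnorm_add_le _ _
    _ = ‖c‖₊ + ‖d‖₊ * ‖a‖₊ := by rw [nnnorm_smul, nnnorm_smul, nnnorm_one, mul_one]

theorem IsSelfAdjoint.spectralRadius_list_prod_smul_one_add_smul_le {ι A : Type*}
    [CStarAlgebra A] {a : A} (ha : IsSelfAdjoint a) (l : List ι) (c d : ι → ℂ) :
    spectralRadius ℂ (l.map fun i => c i • (1 : A) + d i • a).prod ≤
      (l.map fun i => (‖c i‖₊ : ℝ≥0∞) + ‖d i‖₊ * spectralRadius ℂ a).prod := by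
  rcases subsingleton_or_nontrivial A with hA | hA
  · simp [spectralRadius, spectrum.of_subsingleton]
  have hnorm : ‖(l.map fun i => c i • (1 : A) + d i • a).prod‖₊ ≤
      (l.map fun i => ‖c i‖₊ + ‖d i‖₊ * ‖a‖₊).prod :=
    (List.nnnorm_prod_le _).trans <| by
      rw [List.map_map]
      exact List.prod_le_prod' fun i _ => nnnorm_smul_one_add_smul_le (c i) (d i) a
  rw [ha.spectralRadius_eq_nnnorm]
  calc spectralRadius ℂ (l.map fun i => c i • (1 : A) + d i • a).prod
      ≤ ‖(l.map fun i => c i • (1 : A) + d i • a).prod‖₊ := spectrum.spectralRadius_le_nnnorm _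
    _ ≤ ((l.map fun i => ‖c i‖₊ + ‖d i‖₊ * ‖a‖₊).prod : ℝ≥0) := ENNReal.coe_le_coe.mpr hnorm
    _ = _ := (map_list_prod ENNReal.ofNNRealHom _).trans (by rw [List.map_map]; rfl)

theorem Matrix.IsSymm.isSelfAdjoint_map_ofReal {n : Type*} {M : Matrix n n ℝ} (hM : M.IsSymm) :
    IsSelfAdjoint (M.map Complex.ofReal) :=
  (isHermitian_iff_isSymm.mpr hM |>.map _ fun x => (Complex.conj_ofReal x).symm).isSelfAdjoint

/-- Sufficient stability condition for periodic ARMA_K: if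
`∏_{τ<K} (|θ_τ| + |ψ_τ| ρ(M)) < 1`, then `ρ(Γ_{K-1} ⋯ Γ_0) < 1`, where
`Γ_τ = θ_τ I + ψ_τ M`. -/
theorem armaK_periodic_stability {N K : ℕ} (M : Matrix (Fin N) (Fin N) ℝ)
    (hM : M.IsSymm) (θ ψ : ℕ → ℂ)
    (hstab : ∏ τ ∈ Finset.range K,
        ((‖θ τ‖₊ : ℝ≥0∞) + (‖ψ τ‖₊ : ℝ≥0∞) * spectralRadius ℂ (M.map Complex.ofReal)) < 1) :
    spectralRadius ℂ
        (((List.range K).reverse.map (fun τ =>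
          θ τ • (1 : Matrix (Fin N) (Fin N) ℂ) + ψ τ • M.map Complex.ofReal)).prod) < 1 := by
  let _ : CStarAlgebra (Matrix (Fin N) (Fin N) ℂ) := Matrix.instCStarAlgebra
  calc _ ≤ ((List.range K).reverse.map fun τ =>
          (‖θ τ‖₊ : ℝ≥0∞) + ‖ψ τ‖₊ * spectralRadius ℂ (M.map Complex.ofReal)).prod :=
        hM.isSelfAdjoint_map_ofReal.spectralRadius_list_prod_smul_one_add_smul_le _ θ ψ
    _ = ∏ τ ∈ Finset.range K,
          ((‖θ τ‖₊ : ℝ≥0∞) + ‖ψ τ‖₊ * spectralRadius ℂ (M.map Complex.ofReal)) := by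
        rw [List.map_reverse, List.prod_reverse]; rfl
    _ < 1 := hstab
end

section
/- If the time-varying input is constant, x_t = x for all t, and |ψ μ_n| < 1 for all n, then the time-varying ARMA₁ output y_t converges to Σ_n [φ/(1 − ψ μ_n)] ⟨x, φ_n⟩ φ_n, which equals the evaluation of the transfer function H(z, μ_n) = φ/(z − ψ μ_n) at z = 1 applied coefficient-wise. -/
open Filter
open scoped InnerProductSpace

lemma scalar_arma_limit (r s : ℂ) (hr : ‖r‖ < 1) (a : ℕ → ℂ)
    (ha : ∀ t, a (t + 1) = r * a t + s) :
    Tendsto a atTop (nhds (s / (1 - r))) := by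
  have hr1 : (1 : ℂ) - r ≠ 0 := by
    intro h
    have : r = 1 := by linear_combination -h
    rw [this] at hr; simp at hr
  set L := s / (1 - r) with hL
  have hLs : r * L + s - L = 0 := by
    have : L * (1 - r) = s := div_mul_cancel₀ s hr1
    linear_combination -this
  have key : ∀ t, a t - L = r ^ t * (a 0 - L) := by
    intro t
    induction t with
    | zero => simp
    | succ t ih =>
      rw [ha t, pow_succ]
      ring_nf
      ring_nf at ih
      linear_combination r * ih + hLs
  have h0 : Tendsto (fun t => a t - L) atTop (nhds 0) := by
    have h := (tendsto_pow_atTop_nhds_zero_of_norm_lt_one hr).mul_const (a 0 - L)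
    rw [zero_mul] at h
    exact h.congr fun t => (key t).symm
  have := h0.add_const L
  simpa using this

/-- Constant input: if `x_t = x` for all `t` and `|ψ μ_n| < 1` for all `n`, the
time-varying ARMA₁ output `y_t` converges to `∑ n [φ/(1 − ψ μ_n)] ⟨x, φ_n⟩ φ_n`,
i.e., the transfer function `H(z, μ_n) = φ/(z − ψ μ_n)` evaluated at `z = 1`,
applied coefficient-wise. -/
theorem arma1_constant_input_limit {N : ℕ} (M : Matrix (Fin N) (Fin N) ℝ)
    (hM : M.IsSymm)
    (μ : Fin N → ℝ) (v : Fin N → EuclideanSpace ℂ (Fin N)) (hortho : Orthonormal ℂ v)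
    (heig : ∀ n, (Matrix.toEuclideanCLM (𝕜 := ℂ) (M.map Complex.ofReal)) (v n) =
      (μ n : ℂ) • v n)
    (ψ φ : ℂ) (hstab : ∀ n, ‖ψ * (μ n : ℂ)‖ < 1)
    (x : EuclideanSpace ℂ (Fin N)) (y : ℕ → EuclideanSpace ℂ (Fin N))
    (hy : ∀ t, y (t + 1) =
      ψ • (Matrix.toEuclideanCLM (𝕜 := ℂ) (M.map Complex.ofReal)) (y t) + φ • x) :
    Tendsto y atTop (nhds
      (∑ n, (φ / (1 - ψ * (μ n : ℂ))) • ⟪v n, x⟫_ℂ • v n)) := by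
  classical
  set T := Matrix.toEuclideanCLM (𝕜 := ℂ) (M.map Complex.ofReal) with hT
  -- orthonormal basis
  have hspan : ⊤ ≤ Submodule.span ℂ (Set.range v) := by
    rw [hortho.linearIndependent.span_eq_top_of_card_eq_finrank' (by simp)]
  let b : OrthonormalBasis (Fin N) ℂ (EuclideanSpace ℂ (Fin N)) :=
    OrthonormalBasis.mk hortho hspan
  have hb : ⇑b = v := OrthonormalBasis.coe_mk _ _
  -- T is self-adjoint (Hermitian matrix)
  have hHerm : (M.map Complex.ofReal).IsHermitian := by
    ext i j
    simp [Matrix.conjTranspose_apply, ← Matrix.IsSymm.apply hM j i]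
  -- inner product with T
  have hinner : ∀ n (z : EuclideanSpace ℂ (Fin N)),
      ⟪v n, T z⟫_ℂ = (μ n : ℂ) * ⟪v n, z⟫_ℂ := by
    intro n z
    have hadj : Matrix.toEuclideanLin (M.map Complex.ofReal) =
        LinearMap.adjoint (Matrix.toEuclideanLin (M.map Complex.ofReal)) := by
      conv_lhs => rw [← hHerm]
      exact Matrix.toEuclideanLin_conjTranspose_eq_adjoint _
    have hTz : ∀ w, T w = Matrix.toEuclideanLin (M.map Complex.ofReal) w := by
      intro w
      rw [hT, ← Matrix.coe_toEuclideanCLM_eq_toEuclideanLin]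
      rfl
    calc ⟪v n, T z⟫_ℂ = ⟪LinearMap.adjoint (Matrix.toEuclideanLin (M.map Complex.ofReal)) (v n), z⟫_ℂ := by
          rw [hTz, LinearMap.adjoint_inner_left]
      _ = ⟪T (v n), z⟫_ℂ := by rw [← hadj, ← hTz]
      _ = (μ n : ℂ) * ⟪v n, z⟫_ℂ := by
          rw [heig n, inner_smul_left]
          simp [Complex.conj_ofReal]
  -- coefficient recursion
  have hcoef : ∀ n, Tendsto (fun t => ⟪v n, y t⟫_ℂ) atTop
      (nhds ((φ * ⟪v n, x⟫_ℂ) / (1 - ψ * (μ n : ℂ)))) := by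
    intro n
    apply scalar_arma_limit (ψ * (μ n : ℂ)) (φ * ⟪v n, x⟫_ℂ) (hstab n)
    intro t
    rw [hy t, inner_add_right, inner_smul_right, inner_smul_right, hinner]
    ring
  -- expansion of y t
  have hexp : ∀ t, y t = ∑ n, ⟪v n, y t⟫_ℂ • v n := by
    intro t
    conv_lhs => rw [← b.sum_repr' (y t)]
    simp [hb]
  have hlim : Tendsto (fun t => ∑ n, ⟪v n, y t⟫_ℂ • v n) atTop
      (nhds (∑ n, ((φ * ⟪v n, x⟫_ℂ) / (1 - ψ * (μ n : ℂ))) • v n)) := by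
    exact tendsto_finset_sum _ fun n _ => (hcoef n).smul_const (v n)
  have heq : (∑ n, ((φ * ⟪v n, x⟫_ℂ) / (1 - ψ * (μ n : ℂ))) • v n) =
      ∑ n, (φ / (1 - ψ * (μ n : ℂ))) • ⟪v n, x⟫_ℂ • v n := by
    refine Finset.sum_congr rfl fun n _ => ?_
    rw [smul_smul]
    congr 1
    ring
  rw [heq] at hlim
  exact hlim.congr fun t => (hexp t).symm
end

section
/- Robustness to graph perturbation: let M, M' be symmetric matrices with ‖ψM‖ < 1 and ‖ψM'‖ < 1, and let y, y' be the fixed points of the ARMA₁ recursion with the same input x but matrices M and M' respectively. Then ‖y − y'‖ ≤ |ψ| ‖M − M'‖ · |φ| ‖x‖ / ((1 − ‖ψM‖)(1 − ‖ψM'‖)). -/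
/-- Robustness to graph perturbation: if `y` and `y'` are the fixed points of the ARMA₁
recursion with the same input `x` but matrices `M` and `M'`, where `‖ψM‖ < 1` and
`‖ψM'‖ < 1`, then `‖y − y'‖ ≤ |ψ| ‖M − M'‖ |φ| ‖x‖ / ((1 − ‖ψM‖)(1 − ‖ψM'‖))`. -/
theorem arma1_graph_robustness {N : ℕ} (M M' : Matrix (Fin N) (Fin N) ℝ)
    (hM : M.IsSymm) (hM' : M'.IsSymm) (ψ φ : ℂ)
    (hop : ‖Matrix.toEuclideanCLM (𝕜 := ℂ) (ψ • M.map Complex.ofReal)‖ < 1)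
    (hop' : ‖Matrix.toEuclideanCLM (𝕜 := ℂ) (ψ • M'.map Complex.ofReal)‖ < 1)
    (x y y' : EuclideanSpace ℂ (Fin N))
    (hy : y = ψ • (Matrix.toEuclideanCLM (𝕜 := ℂ) (M.map Complex.ofReal)) y + φ • x)
    (hy' : y' = ψ • (Matrix.toEuclideanCLM (𝕜 := ℂ) (M'.map Complex.ofReal)) y' + φ • x) :
    ‖y - y'‖ ≤
      ‖ψ‖ * ‖Matrix.toEuclideanCLM (𝕜 := ℂ) (M.map Complex.ofReal) -
              Matrix.toEuclideanCLM (𝕜 := ℂ) (M'.map Complex.ofReal)‖ *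
        (‖φ‖ * ‖x‖) /
      ((1 - ‖Matrix.toEuclideanCLM (𝕜 := ℂ) (ψ • M.map Complex.ofReal)‖) *
       (1 - ‖Matrix.toEuclideanCLM (𝕜 := ℂ) (ψ • M'.map Complex.ofReal)‖)) := by
  set T := Matrix.toEuclideanCLM (𝕜 := ℂ) (M.map Complex.ofReal) with hT
  set T' := Matrix.toEuclideanCLM (𝕜 := ℂ) (M'.map Complex.ofReal) with hT'
  have hsm : Matrix.toEuclideanCLM (𝕜 := ℂ) (ψ • M.map Complex.ofReal) = ψ • T := by
    rw [hT, map_smul]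
  have hsm' : Matrix.toEuclideanCLM (𝕜 := ℂ) (ψ • M'.map Complex.ofReal) = ψ • T' := by
    rw [hT', map_smul]
  rw [hsm] at hop ⊢
  rw [hsm'] at hop' ⊢
  set a := ‖ψ • T‖ with ha
  set a' := ‖ψ • T'‖ with ha'
  have ha0 : 0 ≤ a := norm_nonneg _
  have ha0' : 0 ≤ a' := norm_nonneg _
  -- y - y' = (ψ•T)(y - y') + ψ • ((T - T') y')
  have key : y - y' = (ψ • T) (y - y') + ψ • ((T - T') y') := by
    rw [ContinuousLinearMap.sub_apply, ContinuousLinearMap.smul_apply, map_sub, smul_sub]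
    nth_rewrite 1 [hy, hy']
    module
  have h1 : ‖y - y'‖ ≤ a * ‖y - y'‖ + ‖ψ‖ * ‖T - T'‖ * ‖y'‖ := by
    calc ‖y - y'‖ = ‖(ψ • T) (y - y') + ψ • ((T - T') y')‖ := by rw [← key]
    _ ≤ ‖(ψ • T) (y - y')‖ + ‖ψ • ((T - T') y')‖ := norm_add_le _ _
    _ ≤ a * ‖y - y'‖ + ‖ψ‖ * (‖T - T'‖ * ‖y'‖) := by
        gcongr
        · exact (ψ • T).le_opNorm _
        · rw [norm_smul]
          gcongr
          exact (T - T').le_opNorm _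
    _ = a * ‖y - y'‖ + ‖ψ‖ * ‖T - T'‖ * ‖y'‖ := by ring
  have h2 : ‖y'‖ ≤ a' * ‖y'‖ + ‖φ‖ * ‖x‖ := by
    calc ‖y'‖ = ‖ψ • T' y' + φ • x‖ := by rw [← hy']
    _ ≤ ‖ψ • T' y'‖ + ‖φ • x‖ := norm_add_le _ _
    _ ≤ a' * ‖y'‖ + ‖φ‖ * ‖x‖ := by
        gcongr
        · calc ‖ψ • T' y'‖ = ‖(ψ • T') y'‖ := by
                rw [ContinuousLinearMap.smul_apply]
          _ ≤ a' * ‖y'‖ := (ψ • T').le_opNorm _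
        · rw [norm_smul]
  have hden' : 0 < 1 - a' := by linarith
  have hden : 0 < (1 - a) * (1 - a') := by nlinarith
  rw [le_div_iff₀ hden]
  set c := ‖ψ‖ * ‖T - T'‖ with hc
  have hc0 : 0 ≤ c := mul_nonneg (norm_nonneg _) (norm_nonneg _)
  set d := ‖y - y'‖
  set e := ‖y'‖
  set k := ‖φ‖ * ‖x‖ with hk
  have he0 : 0 ≤ e := norm_nonneg _
  have h1' : (1 - a) * d ≤ c * e := by linarith
  have h2' : (1 - a') * e ≤ k := by linarith
  calc d * ((1 - a) * (1 - a')) = ((1 - a) * d) * (1 - a') := by ring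
  _ ≤ (c * e) * (1 - a') := mul_le_mul_of_nonneg_right h1' hden'.le
  _ = c * ((1 - a') * e) := by ring
  _ ≤ c * k := mul_le_mul_of_nonneg_left h2' hc0
end
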